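/- Let d ≥ 1, s > 0, and let f be a Borel probability measure on ℝ^d. Then for every N ≥ 1, ∫_{(ℝ^d)^N} ‖μ^N_V − f‖²_{Ḣ^{−s}} df^{⊗N}(V) = (1/N) · ∫_{ℝ^d} (1 − |f̂(ξ)|²)/|ξ|^{2s} dξ (as an identity of possibly infinite nonnegative quantities). -/

import Mathlib

open MeasureTheory Filter
open scoped ENNReal BigOperators Topology

noncomputable section


/-- `ℝ^d` as a Euclidean space. -/
abbrev Euc (d : ℕ) : Type := EuclideanSpace ℝ (Fin d)

/-- Fourier transform of a measure: `f̂(ξ) = ∫ e^{-i v·ξ} df(v)`. -/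
def fourierM {d : ℕ} (f : Measure (Euc d)) (ξ : Euc d) : ℂ :=
  ∫ v, Complex.exp (-(Complex.I * ((inner ℝ v ξ : ℝ) : ℂ))) ∂f

/-- Squared homogeneous negative Sobolev norm `‖f-g‖²_{Ḣ^{-s}}`, valued in `ℝ≥0∞`. -/
def homSobSq {d : ℕ} (s : ℝ) (f g : Measure (Euc d)) : ℝ≥0∞ :=
  ∫⁻ ξ, ENNReal.ofReal (‖fourierM f ξ - fourierM g ξ‖ ^ 2 / ‖ξ‖ ^ (2 * s))

/-- Empirical measure `μ^N_V = (1/N) ∑ δ_{v_i}`. -/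
def empMeas {E : Type*} [MeasurableSpace E] {N : ℕ} (V : Fin N → E) : Measure E :=
  (N : ℝ≥0∞)⁻¹ • ∑ i : Fin N, Measure.dirac (V i)

/-! The Fourier transform of `μ^N_V` at `ξ` is the sample mean of the `N` independent
unit-modulus variables `e^{-i v_k·ξ}`, whose common mean is `f̂(ξ)`. After exchanging the two
integrals (Tonelli), the left side is the `ξ`-integral of the mean squared deviation of this
sample mean, which is `1/N` times the variance `E|X|² - |EX|² = 1 - |f̂(ξ)|²` of one sample:
cross terms vanish by independence. -/

open ProbabilityTheory

section InnerProductSpace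

variable {Ω E : Type*} [MeasurableSpace Ω] {μ : Measure Ω}
  [NormedAddCommGroup E] [InnerProductSpace ℝ E]

lemma integrable_inner_of_memLp_two {X Y : Ω → E} (hX : MemLp X 2 μ) (hY : MemLp Y 2 μ) :
    Integrable (fun ω => inner ℝ (X ω) (Y ω)) μ := by
  refine ((hX.integrable_norm_pow two_ne_zero).add (hY.integrable_norm_pow two_ne_zero)).mono'
    (hX.aestronglyMeasurable.inner hY.aestronglyMeasurable) (ae_of_all _ fun ω => ?_)
  have := abs_real_inner_le_norm (X ω) (Y ω)
  simp only [Real.norm_eq_abs, Pi.add_apply]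
  nlinarith [norm_nonneg (X ω), norm_nonneg (Y ω), sq_nonneg (‖X ω‖ - ‖Y ω‖)]

variable [CompleteSpace E] [IsProbabilityMeasure μ]

lemma integral_norm_sub_integral_sq {X : Ω → E} (hX : MemLp X 2 μ) :
    ∫ ω, ‖X ω - ∫ ω', X ω' ∂μ‖ ^ 2 ∂μ = ∫ ω, ‖X ω‖ ^ 2 ∂μ - ‖∫ ω, X ω ∂μ‖ ^ 2 := by
  set m := ∫ ω, X ω ∂μ
  have hXi : Integrable X μ := hX.integrable one_le_two
  have hX2 : Integrable (fun ω => ‖X ω‖ ^ 2) μ := hX.integrable_norm_pow two_ne_zero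
  have hXm : Integrable (fun ω => 2 * inner ℝ m (X ω)) μ := (hXi.const_inner m).const_mul 2
  simp_rw [norm_sub_sq_real, real_inner_comm m]
  rw [integral_add (f := fun ω => ‖X ω‖ ^ 2 - 2 * inner ℝ m (X ω)) (hX2.sub hXm)
    (integrable_const _), integral_sub hX2 hXm, integral_const_mul, integral_inner hXi]
  simp only [real_inner_self_eq_norm_sq, integral_const, probReal_univ, smul_eq_mul, one_mul, m]
  ring

variable {ι : Type*} [Fintype ι]

lemma integral_inner_comp_eval_eq_zero_of_ne {X : Ω → E} (hX : Integrable X μ)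
    (h0 : ∫ ω, X ω ∂μ = 0) {i j : ι} (hij : i ≠ j) :
    ∫ V : ι → Ω, inner ℝ (X (V i)) (X (V j)) ∂Measure.pi (fun _ => μ) = 0 := by
  have hindep : IndepFun (fun V : ι → Ω => V i) (fun V => V j) (Measure.pi fun _ => μ) :=
    (iIndepFun_pi (X := fun _ => id) fun _ => aemeasurable_id).indepFun hij
  have hmap : ∀ k : ι, (Measure.pi fun _ => μ).map (fun V : ι → Ω => V k) = μ :=
    fun k => (measurePreserving_eval _ k).map_eq
  have hmean : ∀ k : ι, ∫ V : ι → Ω, X (V k) ∂Measure.pi (fun _ => μ) = 0 := fun k => by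
    rw [integral_comp_eval (μ := fun _ => μ) hX.aestronglyMeasurable, h0]
  have := hindep.integral_bilin_comp_comp (measurable_pi_apply i).aemeasurable
    (measurable_pi_apply j).aemeasurable (by rwa [hmap]) (by rwa [hmap]) (innerSL ℝ)
  rwa [hmean, hmean, map_zero] at this

lemma integral_norm_sum_sq_pi {X : Ω → E} (hX : MemLp X 2 μ) (h0 : ∫ ω, X ω ∂μ = 0) :
    ∫ V : ι → Ω, ‖∑ i, X (V i)‖ ^ 2 ∂Measure.pi (fun _ => μ)
      = Fintype.card ι * ∫ ω, ‖X ω‖ ^ 2 ∂μ := by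
  have hXV : ∀ i : ι, MemLp (fun V : ι → Ω => X (V i)) 2 (Measure.pi fun _ => μ) :=
    fun i => hX.comp_measurePreserving (measurePreserving_eval _ i)
  have hdiag : ∀ i : ι, ∫ V : ι → Ω, inner ℝ (X (V i)) (X (V i)) ∂Measure.pi (fun _ => μ)
      = ∫ ω, ‖X ω‖ ^ 2 ∂μ := fun i => by
    simp_rw [real_inner_self_eq_norm_sq]
    exact integral_comp_eval (μ := fun _ => μ) (f := fun ω => ‖X ω‖ ^ 2)
      (hX.aestronglyMeasurable.norm.pow 2)
  have hrow : ∀ i : ι, ∫ V : ι → Ω, ∑ j, inner ℝ (X (V i)) (X (V j)) ∂Measure.pi (fun _ => μ)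
      = ∫ ω, ‖X ω‖ ^ 2 ∂μ := fun i => by
    rw [integral_finsetSum _ fun j _ => integrable_inner_of_memLp_two (hXV i) (hXV j),
      Finset.sum_eq_single i (fun j _ hji => integral_inner_comp_eval_eq_zero_of_ne
        (hX.integrable one_le_two) h0 hji.symm) (by simp), hdiag]
  simp_rw [← real_inner_self_eq_norm_sq, sum_inner, inner_sum]
  rw [integral_finsetSum _ fun i _ => integrable_finsetSum _ fun j _ =>
    integrable_inner_of_memLp_two (hXV i) (hXV j)]
  simp [hrow]

lemma integral_norm_smul_sum_sub_integral_sq {N : ℕ} (hN : N ≠ 0) {X : Ω → E}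
    (hX : MemLp X 2 μ) :
    ∫ V : Fin N → Ω, ‖(N : ℝ)⁻¹ • ∑ i, X (V i) - ∫ ω, X ω ∂μ‖ ^ 2 ∂Measure.pi (fun _ => μ)
      = (∫ ω, ‖X ω‖ ^ 2 ∂μ - ‖∫ ω, X ω ∂μ‖ ^ 2) / N := by
  set m := ∫ ω, X ω ∂μ with hm
  have hNR : (N : ℝ) ≠ 0 := by exact_mod_cast hN
  have hY : MemLp (fun ω => X ω - m) 2 μ := hX.sub (memLp_const m)
  have hY0 : ∫ ω, X ω - m ∂μ = 0 := by
    rw [integral_sub (hX.integrable one_le_two) (integrable_const m)]; simp [m]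
  have hcenter : ∀ V : Fin N → Ω,
      (N : ℝ)⁻¹ • ∑ i, X (V i) - m = (N : ℝ)⁻¹ • ∑ i, (X (V i) - m) := fun V => by
    rw [Finset.sum_sub_distrib, smul_sub, Finset.sum_const, Finset.card_fin,
      ← Nat.cast_smul_eq_nsmul ℝ, smul_smul, inv_mul_cancel₀ hNR, one_smul]
  simp_rw [hcenter, norm_smul, mul_pow]
  rw [integral_const_mul, integral_norm_sum_sq_pi hY hY0, Fintype.card_fin,
    integral_norm_sub_integral_sq hX, ← hm, norm_inv, RCLike.norm_natCast]
  field_simp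

lemma lintegral_ofReal_norm_smul_sum_sub_integral_sq {N : ℕ} (hN : N ≠ 0) {X : Ω → E}
    (hX : MemLp X 2 μ) :
    ∫⁻ V : Fin N → Ω, ENNReal.ofReal (‖(N : ℝ)⁻¹ • ∑ i, X (V i) - ∫ ω, X ω ∂μ‖ ^ 2)
        ∂Measure.pi (fun _ => μ)
      = ENNReal.ofReal ((∫ ω, ‖X ω‖ ^ 2 ∂μ - ‖∫ ω, X ω ∂μ‖ ^ 2) / N) := by
  have hmean : MemLp (fun V : Fin N → Ω => (N : ℝ)⁻¹ • ∑ i, X (V i) - ∫ ω, X ω ∂μ) 2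
      (Measure.pi fun _ => μ) :=
    ((memLp_finsetSum (f := fun i (V : Fin N → Ω) => X (V i)) Finset.univ fun i _ =>
      hX.comp_measurePreserving (measurePreserving_eval _ i)).const_smul (N : ℝ)⁻¹).sub
      (memLp_const _)
  rw [← ofReal_integral_eq_lintegral_ofReal (hmean.integrable_norm_pow two_ne_zero)
    (ae_of_all _ fun _ => sq_nonneg _), integral_norm_smul_sum_sub_integral_sq hN hX]

end InnerProductSpace

lemma integral_empMeas {E F : Type*} [MeasurableSpace E] [MeasurableSingletonClass E]
    [NormedAddCommGroup F] [NormedSpace ℝ F] [CompleteSpace F] {N : ℕ} (V : Fin N → E)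
    (g : E → F) :
    ∫ v, g v ∂empMeas V = (N : ℝ)⁻¹ • ∑ i, g (V i) := by
  rw [empMeas, integral_smul_measure, integral_finsetSum_measure fun i _ =>
    integrable_dirac (by simp)]
  simp [integral_dirac]

lemma norm_cexp_neg_I_mul_ofReal (t : ℝ) : ‖Complex.exp (-(Complex.I * t))‖ = 1 := by
  rw [← mul_neg, ← Complex.ofReal_neg, Complex.norm_exp_I_mul_ofReal]

section

variable {d : ℕ}

lemma continuous_cexp_neg_I_mul_inner : Continuous fun p : Euc d × Euc d =>
    Complex.exp (-(Complex.I * ((inner ℝ p.1 p.2 : ℝ) : ℂ))) := by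
  fun_prop

lemma measurable_fourierM (f : Measure (Euc d)) [SFinite f] : Measurable (fourierM f) :=
  (continuous_cexp_neg_I_mul_inner.comp continuous_swap).stronglyMeasurable
    |>.integral_prod_right' |>.measurable

lemma norm_fourierM_le_one (f : Measure (Euc d)) [IsProbabilityMeasure f] (ξ : Euc d) :
    ‖fourierM f ξ‖ ≤ 1 := by
  simpa [fourierM] using norm_integral_le_of_norm_le_const (ae_of_all f fun v =>
    (norm_cexp_neg_I_mul_ofReal (inner ℝ v ξ)).le)

lemma fourierM_empMeas {N : ℕ} (V : Fin N → Euc d) (ξ : Euc d) :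
    fourierM (empMeas V) ξ
      = (N : ℝ)⁻¹ • ∑ i, Complex.exp (-(Complex.I * ((inner ℝ (V i) ξ : ℝ) : ℂ))) :=
  integral_empMeas V _

lemma measurable_fourierM_empMeas {N : ℕ} :
    Measurable fun p : (Fin N → Euc d) × Euc d => fourierM (empMeas p.1) p.2 := by
  simp_rw [fourierM_empMeas]
  fun_prop

lemma lintegral_ofReal_norm_fourierM_empMeas_sub_sq_div {N : ℕ} (hN : N ≠ 0)
    (f : Measure (Euc d)) [IsProbabilityMeasure f] (ξ : Euc d) (c : ℝ) :
    ∫⁻ V : Fin N → Euc d, ENNReal.ofReal (‖fourierM (empMeas V) ξ - fourierM f ξ‖ ^ 2 / c)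
        ∂Measure.pi (fun _ => f)
      = (N : ℝ≥0∞)⁻¹ * ENNReal.ofReal ((1 - ‖fourierM f ξ‖ ^ 2) / c) := by
  set X : Euc d → ℂ := fun v => Complex.exp (-(Complex.I * ((inner ℝ v ξ : ℝ) : ℂ)))
  have hX1 : ∀ v, ‖X v‖ = 1 := fun v => norm_cexp_neg_I_mul_ofReal _
  have hX : MemLp X 2 f := .of_bound
    (continuous_cexp_neg_I_mul_inner.comp (continuous_id.prodMk continuous_const)
      |>.aestronglyMeasurable) 1 (ae_of_all _ fun v => (hX1 v).le)
  have hvar : 0 ≤ 1 - ‖fourierM f ξ‖ ^ 2 := by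
    nlinarith [norm_fourierM_le_one f ξ, norm_nonneg (fourierM f ξ)]
  rw [show fourierM f ξ = ∫ v, X v ∂f from rfl] at hvar ⊢
  simp_rw [div_eq_mul_inv _ c, ENNReal.ofReal_mul (sq_nonneg _), fourierM_empMeas]
  rw [lintegral_mul_const' _ _ ENNReal.ofReal_ne_top,
    lintegral_ofReal_norm_smul_sum_sub_integral_sq hN hX]
  simp only [hX1, one_pow, integral_const, probReal_univ, smul_eq_mul, one_mul]
  rw [ENNReal.ofReal_mul hvar, ENNReal.ofReal_div_of_pos (by positivity),
    ENNReal.ofReal_natCast, div_eq_mul_inv]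
  ring

end

theorem stmt6_general (d : ℕ) (s : ℝ)
    (f : Measure (Euc d)) (hf : IsProbabilityMeasure f) (N : ℕ) (hN : 1 ≤ N) :
    (∫⁻ V : Fin N → Euc d, homSobSq s (empMeas V) f ∂Measure.pi fun _ => f)
      = (N : ℝ≥0∞)⁻¹
        * ∫⁻ ξ, ENNReal.ofReal ((1 - ‖fourierM f ξ‖ ^ 2) / ‖ξ‖ ^ (2 * s)) := by
  have hN0 : N ≠ 0 := Nat.one_le_iff_ne_zero.mp hN
  have hmeas : Measurable fun p : (Fin N → Euc d) × Euc d => ENNReal.ofReal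
      (‖fourierM (empMeas p.1) p.2 - fourierM f p.2‖ ^ 2 / ‖p.2‖ ^ (2 * s)) := by
    have hfourier : Measurable fun p : (Fin N → Euc d) × Euc d => fourierM f p.2 :=
      (measurable_fourierM f).comp measurable_snd
    have hfourierEmp := measurable_fourierM_empMeas (d := d) (N := N)
    fun_prop
  simp only [homSobSq]
  rw [lintegral_lintegral_swap hmeas.aemeasurable]
  simp_rw [lintegral_ofReal_norm_fourierM_empMeas_sub_sq_div hN0]
  exact lintegral_const_mul' _ _ (by simpa using hN0)

theorem stmt6 (d : ℕ) (hd : 1 ≤ d) (s : ℝ) (hs : 0 < s)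
    (f : Measure (Euc d)) (hf : IsProbabilityMeasure f) (N : ℕ) (hN : 1 ≤ N) :
    (∫⁻ V : Fin N → Euc d, homSobSq s (empMeas V) f ∂Measure.pi fun _ => f)
      = (N : ℝ≥0∞)⁻¹
        * ∫⁻ ξ, ENNReal.ofReal ((1 - ‖fourierM f ξ‖ ^ 2) / ‖ξ‖ ^ (2 * s)) :=
  stmt6_general d s f hf N hN
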